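/- Let D₄(H) ⊆ H ⊗ 𝔏₅ and D̄₄(H) ⊆ H ⊗ 𝔏̄₅ be the kernels of the ℤ-linear bracket maps h ⊗ u ↦ [h,u] into 𝔏₆ and 𝔏̄₆ respectively. Then the map q : D₄(H) → D̄₄(H) induced by id_H ⊗ p₅, where p₅ : 𝔏₅ → 𝔏̄₅ is the canonical projection, is surjective, and its kernel equals (H ⊗ (⟨⟨ω⟩⟩ ∩ 𝔏₅)) ∩ D₄(H). -/

import Mathlib

/-!
Since `𝔏` is generated by `H`, the ideal `⟨⟨ω⟩⟩` is spanned by the chains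
`[h₁, [h₂, …, [hₖ, ω]…]]`, and projecting onto a homogeneous component shows that
`⟨⟨ω⟩⟩ ∩ 𝔏₆` is spanned by those with `k = 4`, i.e. by brackets `[h, c]` with
`c ∈ ⟨⟨ω⟩⟩ ∩ 𝔏₅`. So a lift `x ∈ H ⊗ 𝔏₅` of an element of `D̄₄(H)` can be corrected by an
element of `H ⊗ (⟨⟨ω⟩⟩ ∩ 𝔏₅)` so as to lie in `D₄(H)`, which gives surjectivity. The kernel
of `id_H ⊗ p₅` is `H ⊗ (⟨⟨ω⟩⟩ ∩ 𝔏₅)` by right exactness of `H ⊗ -`.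
-/

open scoped TensorProduct

noncomputable section

/-- The free Lie ring `𝔏` on the `2g` generators. -/
abbrev L (g : ℕ) : Type := FreeLieAlgebra ℤ (Fin (2 * g))

/-- The free abelian group `H` of rank `2g`. -/
abbrev H (g : ℕ) : Type := Fin (2 * g) → ℤ

/-- The canonical inclusion of `H` into `𝔏` as the degree `1` part. -/
def toL (g : ℕ) : H g →ₗ[ℤ] L g where
  toFun v := ∑ i, v i • FreeLieAlgebra.of ℤ i
  map_add' x y := by simp [add_smul, Finset.sum_add_distrib]
  map_smul' c x := by simp [Finset.smul_sum, smul_smul]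

/-- Index of the basis element `aᵢ`. -/
def aIdx (g : ℕ) (i : Fin g) : Fin (2 * g) := ⟨i.1, by have := i.2; omega⟩

/-- Index of the basis element `bᵢ`. -/
def bIdx (g : ℕ) (i : Fin g) : Fin (2 * g) := ⟨g + i.1, by have := i.2; omega⟩

/-- The basis element `aᵢ` of `H`. -/
def aV (g : ℕ) (i : Fin g) : H g := Pi.single (aIdx g i) 1

/-- The basis element `bᵢ` of `H`. -/
def bV (g : ℕ) (i : Fin g) : H g := Pi.single (bIdx g i) 1

/-- The symplectic pairing `ω : H × H → ℤ`, with `ω(aᵢ,bⱼ) = δᵢⱼ`, `ω(aᵢ,aⱼ) = ω(bᵢ,bⱼ) = 0`. -/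
def omegaPair (g : ℕ) (x y : H g) : ℤ :=
  ∑ i : Fin g, (x (aIdx g i) * y (bIdx g i) - x (bIdx g i) * y (aIdx g i))

/-- `IsBrkt g k x` means that `x` is a `k`-fold Lie bracket of elements of `H`. -/
inductive IsBrkt (g : ℕ) : ℕ → L g → Prop
  | of (v : H g) : IsBrkt g 1 (toL g v)
  | lie {m n : ℕ} {x y : L g} : IsBrkt g m x → IsBrkt g n y → IsBrkt g (m + n) ⁅x, y⁆

/-- `𝔏ₖ`, the degree-`k` homogeneous component of the free Lie ring:
the `ℤ`-span of all `k`-fold Lie brackets of elements of `H`. -/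
def homog (g k : ℕ) : Submodule ℤ (L g) := Submodule.span ℤ {x | IsBrkt g k x}

lemma toL_mem (g : ℕ) (v : H g) : toL g v ∈ homog g 1 :=
  Submodule.subset_span (IsBrkt.of v)

lemma lie_mem_homog {g m n : ℕ} {x y : L g} (hx : x ∈ homog g m) (hy : y ∈ homog g n) :
    ⁅x, y⁆ ∈ homog g (m + n) := by
  induction hx using Submodule.span_induction with
  | mem a ha =>
    induction hy using Submodule.span_induction with
    | mem b hb => exact Submodule.subset_span (ha.lie hb)
    | zero => simp
    | add b c hb hc ihb ihc => rw [lie_add]; exact Submodule.add_mem _ ihb ihc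
    | smul t b hb ihb => rw [lie_smul]; exact Submodule.smul_mem _ t ihb
  | zero => simp
  | add a c ha hc iha ihc => rw [add_lie]; exact Submodule.add_mem _ iha ihc
  | smul t a ha iha => rw [smul_lie]; exact Submodule.smul_mem _ t iha

/-- `[[a,b],c]` as an element of `𝔏₃`. -/
def trip (g : ℕ) (a b c : H g) : ↥(homog g 3) :=
  ⟨⁅⁅toL g a, toL g b⁆, toL g c⁆,
    Submodule.subset_span (((IsBrkt.of a).lie (IsBrkt.of b)).lie (IsBrkt.of c))⟩

/-- The symplectic element `ω = Σᵢ [aᵢ, bᵢ] ∈ 𝔏₂`. -/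
def omegaL (g : ℕ) : L g := ∑ i : Fin g, ⁅toL g (aV g i), toL g (bV g i)⁆

lemma omegaL_mem (g : ℕ) : omegaL g ∈ homog g 2 :=
  Submodule.sum_mem _ fun i _ =>
    Submodule.subset_span ((IsBrkt.of (aV g i)).lie (IsBrkt.of (bV g i)))

/-- The Lie ideal `⟨⟨ω⟩⟩` of `𝔏` generated by `ω`. -/
def omegaIdeal (g : ℕ) : LieIdeal ℤ (L g) := LieSubmodule.lieSpan ℤ (L g) {omegaL g}

end

noncomputable section

/-- The submodule `⟨⟨ω⟩⟩ ∩ 𝔏ₖ`, viewed inside `𝔏ₖ`. -/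
def Jsub (g k : ℕ) : Submodule ℤ ↥(homog g k) :=
  Submodule.comap (homog g k).subtype (omegaIdeal g).toSubmodule

/-- `𝔏̄ₖ = 𝔏ₖ / (⟨⟨ω⟩⟩ ∩ 𝔏ₖ)`. -/
abbrev Lbar (g k : ℕ) : Type := ↥(homog g k) ⧸ Jsub g k

/-- The canonical projection `p : 𝔏ₖ → 𝔏̄ₖ`. -/
def pbar (g k : ℕ) : ↥(homog g k) →ₗ[ℤ] Lbar g k := (Jsub g k).mkQ

/-- The bilinear bracket map `H × 𝔏₅ → 𝔏₆`, `(h, u) ↦ [h, u]`. -/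
def brB (g : ℕ) : H g →ₗ[ℤ] ↥(homog g 5) →ₗ[ℤ] ↥(homog g 6) :=
  LinearMap.mk₂ ℤ
    (fun h u => ⟨⁅toL g h, (u : L g)⁆, by
      have h6 : (6 : ℕ) = 1 + 5 := rfl
      rw [h6]
      exact lie_mem_homog (toL_mem g h) u.2⟩)
    (fun h₁ h₂ u => Subtype.ext (by
      show ⁅toL g (h₁ + h₂), (u : L g)⁆ = ⁅toL g h₁, (u : L g)⁆ + ⁅toL g h₂, (u : L g)⁆
      rw [map_add, add_lie]))
    (fun c h u => Subtype.ext (by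
      show ⁅toL g (c • h), (u : L g)⁆ = c • ⁅toL g h, (u : L g)⁆
      rw [map_smul, smul_lie]))
    (fun h u₁ u₂ => Subtype.ext (by
      show ⁅toL g h, (u₁ : L g) + (u₂ : L g)⁆ = ⁅toL g h, (u₁ : L g)⁆ + ⁅toL g h, (u₂ : L g)⁆
      rw [lie_add]))
    (fun c h u => Subtype.ext (by
      show ⁅toL g h, c • (u : L g)⁆ = c • ⁅toL g h, (u : L g)⁆
      rw [lie_smul]))

/-- The bracket map `β : H ⊗ 𝔏₅ → 𝔏₆`, `h ⊗ u ↦ [h, u]`. -/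
def betaMap (g : ℕ) : (H g ⊗[ℤ] ↥(homog g 5)) →ₗ[ℤ] ↥(homog g 6) :=
  TensorProduct.lift (brB g)

/-- `D₄(H)`, the kernel of the bracket map `H ⊗ 𝔏₅ → 𝔏₆`. -/
def D4 (g : ℕ) : Submodule ℤ (H g ⊗[ℤ] ↥(homog g 5)) := LinearMap.ker (betaMap g)

/-- Auxiliary map `𝔏₅ → Hom(H, 𝔏̄₆)`, `u ↦ (h ↦ [h,u] mod ⟨⟨ω⟩⟩)`. -/
def Cmap (g : ℕ) : ↥(homog g 5) →ₗ[ℤ] H g →ₗ[ℤ] Lbar g 6 :=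
  (LinearMap.llcomp ℤ (H g) ↥(homog g 6) (Lbar g 6) (pbar g 6)).comp (brB g).flip

lemma Jsub_le_ker_Cmap (g : ℕ) : Jsub g 5 ≤ LinearMap.ker (Cmap g) := by
  intro u hu
  rw [LinearMap.mem_ker]
  refine LinearMap.ext fun h => ?_
  have hu' : (u : L g) ∈ omegaIdeal g := (LieSubmodule.mem_toSubmodule _).mp hu
  have hmem : ⁅toL g h, (u : L g)⁆ ∈ omegaIdeal g := (omegaIdeal g).lie_mem hu'
  show pbar g 6 (brB g h u) = 0
  rw [pbar, Submodule.mkQ_apply, Submodule.Quotient.mk_eq_zero]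
  exact Submodule.mem_comap.mpr ((LieSubmodule.mem_toSubmodule _).mpr hmem)

/-- The bracket map `β̄ : H ⊗ 𝔏̄₅ → 𝔏̄₆`, `h ⊗ ū ↦ [h, u] mod ⟨⟨ω⟩⟩`. -/
def betaBar (g : ℕ) : (H g ⊗[ℤ] Lbar g 5) →ₗ[ℤ] Lbar g 6 :=
  TensorProduct.lift ((Jsub g 5).liftQ (Cmap g) (Jsub_le_ker_Cmap g)).flip

/-- `D̄₄(H)`, the kernel of the bracket map `H ⊗ 𝔏̄₅ → 𝔏̄₆`. -/
def D4bar (g : ℕ) : Submodule ℤ (H g ⊗[ℤ] Lbar g 5) := LinearMap.ker (betaBar g)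

/-- The map `id_H ⊗ p₅ : H ⊗ 𝔏₅ → H ⊗ 𝔏̄₅`. -/
def Phi (g : ℕ) : (H g ⊗[ℤ] ↥(homog g 5)) →ₗ[ℤ] (H g ⊗[ℤ] Lbar g 5) :=
  LinearMap.lTensor (H g) (pbar g 5)

lemma betaBar_comp_Phi (g : ℕ) :
    (betaBar g).comp (Phi g) = (pbar g 6).comp (betaMap g) := by
  apply TensorProduct.ext'
  intro h u
  rfl

lemma Phi_mem (g : ℕ) : ∀ x ∈ D4 g, Phi g x ∈ D4bar g := by
  intro x hx
  have h1 : betaBar g (Phi g x) = pbar g 6 (betaMap g x) :=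
    LinearMap.congr_fun (betaBar_comp_Phi g) x
  have h2 : betaMap g x = 0 := hx
  simp only [D4bar, LinearMap.mem_ker, h1, h2, map_zero]

/-- The map `q : D₄(H) → D̄₄(H)` induced by `id_H ⊗ p₅`. -/
def qMap (g : ℕ) : ↥(D4 g) →ₗ[ℤ] ↥(D4bar g) :=
  LinearMap.restrict (Phi g) (Phi_mem g)

namespace LieAlgebra

variable {R L : Type*} [CommRing R] [LieRing L] [LieAlgebra R L]

/-- `adChain [s₁, …, sₖ] x = [s₁, [s₂, …, [sₖ, x]…]]`. -/
def adChain (l : List L) (x : L) : L := l.foldr (fun s y => ⁅s, y⁆) x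

lemma adChain_mem_lieSpan (l : List L) (x : L) :
    adChain l x ∈ LieSubmodule.lieSpan R L {x} := by
  induction l with
  | nil => exact LieSubmodule.subset_lieSpan rfl
  | cons s l ih => exact LieSubmodule.lie_mem _ ih

def adChainSpan (S : Set L) (x : L) : Submodule R L :=
  Submodule.span R {y | ∃ l : List L, (∀ s ∈ l, s ∈ S) ∧ adChain l x = y}

lemma lie_mem_adChainSpan_of_mem {S : Set L} {x s v : L} (hs : s ∈ S)
    (hv : v ∈ adChainSpan (R := R) S x) : ⁅s, v⁆ ∈ adChainSpan (R := R) S x := by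
  suffices adChainSpan S x ≤ (adChainSpan S x).comap (ad R L s) from this hv
  refine Submodule.span_le.mpr ?_
  rintro _ ⟨l, hl, rfl⟩
  refine Submodule.subset_span ⟨s :: l, ?_, rfl⟩
  simpa [List.forall_mem_cons] using ⟨hs, hl⟩

/-- The elements whose bracket preserves `adChainSpan S x` form a Lie subalgebra (by the Jacobi
identity), and it contains `S`. -/
lemma lie_mem_adChainSpan {S : Set L} (hS : LieSubalgebra.lieSpan R L S = ⊤) (x a : L)
    {v : L} (hv : v ∈ adChainSpan (R := R) S x) : ⁅a, v⁆ ∈ adChainSpan (R := R) S x := by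
  have ha : a ∈ LieSubalgebra.lieSpan R L S := hS ▸ LieSubalgebra.mem_top a
  induction ha using LieSubalgebra.lieSpan_induction generalizing v with
  | mem s hs => exact lie_mem_adChainSpan_of_mem hs hv
  | zero => simp
  | add a b _ _ iha ihb => rw [add_lie]; exact Submodule.add_mem _ (iha hv) (ihb hv)
  | smul t a _ iha => rw [smul_lie]; exact Submodule.smul_mem _ t (iha hv)
  | lie a b _ _ iha ihb => rw [lie_lie]; exact Submodule.sub_mem _ (iha (ihb hv)) (ihb (iha hv))

theorem lieSpan_singleton_eq_adChainSpan {S : Set L} (hS : LieSubalgebra.lieSpan R L S = ⊤)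
    (x : L) : (LieSubmodule.lieSpan R L {x} : Submodule R L) = adChainSpan S x := by
  refine le_antisymm ?_ (Submodule.span_le.mpr ?_)
  · let I : LieIdeal R L := { adChainSpan S x with lie_mem := lie_mem_adChainSpan hS x _ }
    exact (LieSubmodule.lieSpan_le (N := I)).mpr <| Set.singleton_subset_iff.mpr <|
      Submodule.subset_span ⟨[], by simp, rfl⟩
  · rintro _ ⟨l, -, rfl⟩
    exact adChain_mem_lieSpan l x

end LieAlgebra

theorem FreeLieAlgebra.lieSpan_range_of (R X : Type*) [CommRing R] :
    LieSubalgebra.lieSpan R (FreeLieAlgebra R X) (Set.range (of R)) = ⊤ := by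
  set S := LieSubalgebra.lieSpan R (FreeLieAlgebra R X) (Set.range (of R))
  let ψ : FreeLieAlgebra R X →ₗ⁅R⁆ S :=
    lift R fun i => ⟨of R i, LieSubalgebra.subset_lieSpan ⟨i, rfl⟩⟩
  have hψ : S.incl.comp ψ = LieHom.id :=
    hom_ext (R := R) fun i => congrArg Subtype.val (lift_of_apply (R := R) _ i)
  refine eq_top_iff.mpr fun x _ => ?_
  have hx : S.incl (ψ x) = x := DFunLike.congr_fun hψ x
  exact hx ▸ (ψ x).2

theorem LinearMap.surjective_restrict_ker_of_comp_eq {R M M' P P' : Type*} [Ring R]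
    [AddCommGroup M] [AddCommGroup M'] [AddCommGroup P] [AddCommGroup P']
    [Module R M] [Module R M'] [Module R P] [Module R P']
    {β : M →ₗ[R] P} {β' : M' →ₗ[R] P'} {Φ : M →ₗ[R] M'} {p : P →ₗ[R] P'}
    (hcomm : β'.comp Φ = p.comp β) (hΦ : Function.Surjective Φ)
    (hp : LinearMap.ker p ≤ (LinearMap.ker Φ).map β)
    (hmaps : ∀ x ∈ LinearMap.ker β, Φ x ∈ LinearMap.ker β') :
    Function.Surjective (Φ.restrict hmaps) := by
  rintro ⟨y, hy⟩
  obtain ⟨x, rfl⟩ := hΦ y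
  have hβx : β x ∈ LinearMap.ker p := by
    rw [LinearMap.mem_ker, ← LinearMap.comp_apply, ← hcomm]
    exact hy
  obtain ⟨z, hz, hzx⟩ := hp hβx
  refine ⟨⟨x - z, by simp [hzx]⟩, Subtype.ext ?_⟩
  simp [LinearMap.mem_ker.mp hz]

section Grading

variable (g : ℕ)

/-- `x ↦ Σₖ Xᵏ ⊗ xₖ`, where `xₖ` is the component of `x` in `𝔏ₖ`. -/
def gradingHom : L g →ₗ⁅ℤ⁆ Polynomial ℤ ⊗[ℤ] L g :=
  FreeLieAlgebra.lift ℤ fun i => (Polynomial.X : Polynomial ℤ) ⊗ₜ[ℤ] FreeLieAlgebra.of ℤ i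

def degreeProj (k : ℕ) : L g →ₗ[ℤ] L g :=
  TensorProduct.lift ((LinearMap.lsmul ℤ (L g)).comp (Polynomial.lcoeff ℤ k)) ∘ₗ
    (gradingHom g).toLinearMap

lemma gradingHom_toL (v : H g) :
    gradingHom g (toL g v) = (Polynomial.X : Polynomial ℤ) ⊗ₜ[ℤ] toL g v := by
  change (gradingHom g).toLinearMap (∑ i, v i • FreeLieAlgebra.of ℤ i) =
    _ ⊗ₜ[ℤ] ∑ i, v i • FreeLieAlgebra.of ℤ i
  simp only [map_sum, map_zsmul, TensorProduct.tmul_sum, TensorProduct.tmul_smul]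
  exact Finset.sum_congr rfl fun i _ => congrArg (v i • ·) (FreeLieAlgebra.lift_of_apply _ i)

variable {g}

lemma gradingHom_of_mem_homog {k : ℕ} {x : L g} (hx : x ∈ homog g k) :
    gradingHom g x = (Polynomial.X ^ k : Polynomial ℤ) ⊗ₜ[ℤ] x := by
  induction hx using Submodule.span_induction with
  | mem x hx =>
    induction hx with
    | of v => simpa using gradingHom_toL g v
    | lie _ _ ihx ihy =>
      rw [LieHom.map_lie, ihx, ihy, LieAlgebra.ExtendScalars.bracket_tmul, pow_add]
  | zero => simp
  | add x y _ _ ihx ihy => simp [ihx, ihy, TensorProduct.tmul_add]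
  | smul t x _ ih => simp [ih, TensorProduct.tmul_smul]

lemma degreeProj_of_mem_homog {k n : ℕ} {x : L g} (hx : x ∈ homog g n) :
    degreeProj g k x = if k = n then x else 0 := by
  change TensorProduct.lift _ (gradingHom g x) = _
  rw [gradingHom_of_mem_homog hx]
  simp [Polynomial.coeff_X_pow]

end Grading

lemma toL_single (g : ℕ) (i : Fin (2 * g)) : toL g (Pi.single i 1) = FreeLieAlgebra.of ℤ i := by
  simp [toL, Pi.single_apply]

lemma lieSpan_range_toL (g : ℕ) : LieSubalgebra.lieSpan ℤ (L g) (Set.range (toL g)) = ⊤ :=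
  eq_top_iff.mpr <| (FreeLieAlgebra.lieSpan_range_of ℤ _).ge.trans <|
    LieSubalgebra.lieSpan_mono <| Set.range_subset_iff.mpr fun i => ⟨_, toL_single g i⟩

lemma adChain_mem_homog {g n : ℕ} {l : List (L g)} (hl : ∀ s ∈ l, s ∈ Set.range (toL g))
    {x : L g} (hx : x ∈ homog g n) : LieAlgebra.adChain l x ∈ homog g (l.length + n) := by
  induction l with
  | nil => rw [List.length_nil, zero_add]; exact hx
  | cons s l ih =>
    obtain ⟨h, rfl⟩ := hl s List.mem_cons_self
    have := lie_mem_homog (toL_mem g h) (ih fun t ht => hl t (List.mem_cons_of_mem _ ht))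
    rwa [show 1 + (l.length + n) = (toL g h :: l).length + n by simp; omega] at this

def omegaChainSpan (g k : ℕ) : Submodule ℤ (L g) :=
  Submodule.span ℤ {y | ∃ l : List (L g), (∀ s ∈ l, s ∈ Set.range (toL g)) ∧
    l.length = k ∧ LieAlgebra.adChain l (omegaL g) = y}

/-- The chains of length `k` are exactly the ones of degree `k + 2`, so projecting the
span of all chains onto `𝔏ₖ₊₂` lands in `omegaChainSpan g k`. -/
lemma mem_omegaChainSpan_of_mem_omegaIdeal {g k : ℕ} {w : L g} (hI : w ∈ omegaIdeal g)
    (hw : w ∈ homog g (k + 2)) : w ∈ omegaChainSpan g k := by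
  have hI' : w ∈ LieAlgebra.adChainSpan (R := ℤ) (Set.range (toL g)) (omegaL g) := by
    rw [← LieAlgebra.lieSpan_singleton_eq_adChainSpan (lieSpan_range_toL g)]
    exact hI
  suffices hle : LieAlgebra.adChainSpan (Set.range (toL g)) (omegaL g) ≤
      (omegaChainSpan g k).comap (degreeProj g (k + 2)) by
    simpa [degreeProj_of_mem_homog hw] using hle hI'
  refine Submodule.span_le.mpr ?_
  rintro _ ⟨l, hl, rfl⟩
  rw [SetLike.mem_coe, Submodule.mem_comap,
    degreeProj_of_mem_homog (adChain_mem_homog hl (omegaL_mem g))]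
  split_ifs with hlen
  · exact Submodule.subset_span ⟨l, hl, by omega, rfl⟩
  · exact Submodule.zero_mem _

lemma Jsub_six_le_map_betaMap (g : ℕ) :
    Jsub g 6 ≤ (LinearMap.range (LinearMap.lTensor (H g) (Jsub g 5).subtype)).map (betaMap g) := by
  intro w hw
  suffices omegaChainSpan g 4 ≤ (Submodule.map (betaMap g) _).map (homog g 6).subtype by
    obtain ⟨z, hz, hzw⟩ := this (mem_omegaChainSpan_of_mem_omegaIdeal hw w.2)
    exact Subtype.val_injective hzw ▸ hz
  refine Submodule.span_le.mpr ?_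
  rintro _ ⟨_ | ⟨s, l⟩, hl, hlen, rfl⟩
  · simp at hlen
  obtain ⟨h, rfl⟩ := hl s List.mem_cons_self
  have hc : LieAlgebra.adChain l (omegaL g) ∈ homog g 5 := by
    have hl3 : l.length = 3 := by simpa using hlen
    have := adChain_mem_homog (fun t ht => hl t (List.mem_cons_of_mem _ ht)) (omegaL_mem g)
    rwa [hl3] at this
  let c : ↥(homog g 5) := ⟨_, hc⟩
  have hcJ : c ∈ Jsub g 5 := LieAlgebra.adChain_mem_lieSpan l (omegaL g)
  exact ⟨betaMap g (h ⊗ₜ c), Submodule.mem_map_of_mem ⟨h ⊗ₜ ⟨c, hcJ⟩, rfl⟩, rfl⟩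

theorem stmt9_general (g : ℕ) :
    Function.Surjective (qMap g) ∧
    LinearMap.ker (qMap g) =
      Submodule.comap (D4 g).subtype
        (LinearMap.range (LinearMap.lTensor (H g) (Jsub g 5).subtype)) := by
  have hkerPhi : LinearMap.ker (Phi g) =
      LinearMap.range (LinearMap.lTensor (H g) (Jsub g 5).subtype) :=
    lTensor_mkQ (H g) (Jsub g 5)
  refine ⟨LinearMap.surjective_restrict_ker_of_comp_eq (betaBar_comp_Phi g)
    (LinearMap.lTensor_surjective _ (Submodule.mkQ_surjective _)) ?_ _, ?_⟩
  · rw [hkerPhi, pbar, Submodule.ker_mkQ]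
    exact Jsub_six_le_map_betaMap g
  · exact (LinearMap.ker_restrict _).trans (congrArg _ hkerPhi)

theorem stmt9 (g : ℕ) (hg : 1 ≤ g) :
    Function.Surjective (qMap g) ∧
    LinearMap.ker (qMap g) =
      Submodule.comap (D4 g).subtype
        (LinearMap.range (LinearMap.lTensor (H g) (Jsub g 5).subtype)) :=
  stmt9_general g

end
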